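/- Let σ : I → ℝ⁵ be smooth with ⟨σ(s),σ(s)⟩ = 1 and ⟨σ'(s),σ'(s)⟩ = 1 for all s (a space-like curve in Λ⁴ parametrized by arc length), fix s, and suppose the geodesic curvature vector k_g(s) = σ(s) + σ''(s) is nonzero. Then σ(s), σ'(s), σ''(s) are linearly independent, and: (i) the subspace span(σ(s), σ'(s), σ''(s)) contains a time-like vector (a nonzero v with ⟨v,v⟩ < 0) if and only if ⟨k_g(s),k_g(s)⟩ < 0; (ii) it contains a nonzero vector v with ⟨v,v⟩ ≤ 0 if and only if ⟨k_g(s),k_g(s)⟩ ≤ 0. Equivalently, the restriction of the Lorentz form to span(σ(s), σ'(s), σ''(s)) is positive definite if and only if k_g(s) is space-like; the subspace intersects the light cone transversely (contains time-like vectors) exactly when k_g(s) is time-like, which is the condition for the canal to be regular at s. -/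

import Mathlib

noncomputable def lorentz (x y : Fin 5 → ℝ) : ℝ :=
  x 0 * y 0 + x 1 * y 1 + x 2 * y 2 + x 3 * y 3 - x 4 * y 4

lemma lorentz_symm (x y : Fin 5 → ℝ) : lorentz x y = lorentz y x := by
  simp [lorentz]; ring

lemma lorentz_hasDerivAt {f g : ℝ → Fin 5 → ℝ} {f' g' : Fin 5 → ℝ} {s : ℝ}
    (hf : HasDerivAt f f' s) (hg : HasDerivAt g g' s) :
    HasDerivAt (fun t => lorentz (f t) (g t)) (lorentz f' (g s) + lorentz (f s) g') s := by
  have hfi : ∀ i, HasDerivAt (fun t => f t i) (f' i) s := fun i => hasDerivAt_pi.1 hf i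
  have hgi : ∀ i, HasDerivAt (fun t => g t i) (g' i) s := fun i => hasDerivAt_pi.1 hg i
  have h := (((((hfi 0).mul (hgi 0)).add ((hfi 1).mul (hgi 1))).add
      ((hfi 2).mul (hgi 2))).add ((hfi 3).mul (hgi 3))).sub ((hfi 4).mul (hgi 4))
  refine HasDerivAt.congr_deriv (f := fun t => lorentz (f t) (g t)) h ?_
  simp [lorentz]; ring

lemma lorentz_comb_right (w a b c : Fin 5 → ℝ) (x y z : ℝ) :
    lorentz w (x • a + y • b + z • c)
      = x * lorentz w a + y * lorentz w b + z * lorentz w c := by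
  simp [lorentz]; ring

lemma lorentz_comb2 (a b c : Fin 5 → ℝ) (x y z : ℝ) :
    lorentz (x • a + y • b + z • c) (x • a + y • b + z • c)
      = x^2 * lorentz a a + y^2 * lorentz b b + z^2 * lorentz c c
        + 2*x*y * lorentz a b + 2*x*z * lorentz a c + 2*y*z * lorentz b c := by
  simp [lorentz]; ring

lemma lorentz_add_add (a c : Fin 5 → ℝ) :
    lorentz (a + c) (a + c) = lorentz a a + 2 * lorentz a c + lorentz c c := by
  simp [lorentz]; ring

/-- For an arc-length parametrized space-like curve `σ` in Λ⁴ with nonzero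
geodesic curvature vector `k_g = σ + σ''` at `s`, the vectors `σ, σ', σ''` are
linearly independent; their span contains a time-like vector iff `k_g` is
time-like, contains a nonzero non-space-like vector iff `⟨k_g,k_g⟩ ≤ 0`, and
the Lorentz form is positive definite on the span iff `k_g` is space-like. -/
theorem span_sigma_causal_character_iff_curvature
    (σ : ℝ → Fin 5 → ℝ) (hσ : ContDiff ℝ (⊤ : ℕ∞) σ)
    (hunit : ∀ s, lorentz (σ s) (σ s) = 1)
    (harc : ∀ s, lorentz (deriv σ s) (deriv σ s) = 1)
    (s : ℝ)
    (hkg_ne : σ s + deriv (deriv σ) s ≠ 0) :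
    LinearIndependent ℝ ![σ s, deriv σ s, deriv (deriv σ) s] ∧
    ((∃ v ∈ Submodule.span ℝ {σ s, deriv σ s, deriv (deriv σ) s},
        v ≠ 0 ∧ lorentz v v < 0) ↔
      lorentz (σ s + deriv (deriv σ) s) (σ s + deriv (deriv σ) s) < 0) ∧
    ((∃ v ∈ Submodule.span ℝ {σ s, deriv σ s, deriv (deriv σ) s},
        v ≠ 0 ∧ lorentz v v ≤ 0) ↔
      lorentz (σ s + deriv (deriv σ) s) (σ s + deriv (deriv σ) s) ≤ 0) ∧
    ((∀ v ∈ Submodule.span ℝ {σ s, deriv σ s, deriv (deriv σ) s},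
        v ≠ 0 → 0 < lorentz v v) ↔
      0 < lorentz (σ s + deriv (deriv σ) s) (σ s + deriv (deriv σ) s)) := by
  -- differentiability
  have hσtop : ContDiff ℝ ((⊤:ℕ∞):WithTop ℕ∞) σ := hσ.of_le (by simp)
  have hd1 : Differentiable ℝ σ := hσtop.differentiable (by simp)
  have hσ' : ContDiff ℝ ((⊤:ℕ∞):WithTop ℕ∞) (deriv σ) := (contDiff_infty_iff_deriv.mp hσtop).2
  have hd2 : Differentiable ℝ (deriv σ) := hσ'.differentiable (by simp)
  have hD : ∀ t, HasDerivAt σ (deriv σ t) t := fun t => (hd1 t).hasDerivAt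
  have hD2 : ∀ t, HasDerivAt (deriv σ) (deriv (deriv σ) t) t := fun t => (hd2 t).hasDerivAt
  have hconst : ∀ (F : ℝ → ℝ) (r : ℝ) (d : ℝ) (t : ℝ), (∀ u, F u = r) →
      HasDerivAt F d t → d = 0 := by
    intro F r d t hFr hFd
    have hF : F = fun _ => r := funext hFr
    have := hFd.deriv
    rw [hF] at this
    simpa using this.symm
  -- orthogonality facts
  have fact1 : ∀ t, lorentz (σ t) (deriv σ t) = 0 := by
    intro t
    have h := lorentz_hasDerivAt (hD t) (hD t)
    have h0 := hconst _ 1 _ t hunit h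
    have hs := lorentz_symm (deriv σ t) (σ t)
    linarith
  have fact2 : lorentz (deriv σ s) (deriv (deriv σ) s) = 0 := by
    have h := lorentz_hasDerivAt (hD2 s) (hD2 s)
    have h0 := hconst _ 1 _ s harc h
    have hs := lorentz_symm (deriv (deriv σ) s) (deriv σ s)
    linarith
  have fact3 : lorentz (σ s) (deriv (deriv σ) s) = -1 := by
    have h := lorentz_hasDerivAt (hD s) (hD2 s)
    have h0 := hconst _ 0 _ s fact1 h
    have := harc s
    have hs := lorentz_symm (deriv σ s) (σ s)
    have h1 := fact1 s
    linarith
  set a := σ s with ha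
  set b := deriv σ s with hb
  set c := deriv (deriv σ) s with hc
  have Laa : lorentz a a = 1 := hunit s
  have Lbb : lorentz b b = 1 := harc s
  have Lab : lorentz a b = 0 := fact1 s
  have Lbc : lorentz b c = 0 := fact2
  have Lac : lorentz a c = -1 := fact3
  set K := lorentz (a + c) (a + c) with hK
  have hLcc : lorentz c c = K + 1 := by
    have := lorentz_add_add a c
    rw [← hK] at this
    linarith
  have hQ : ∀ x y z : ℝ, lorentz (x • a + y • b + z • c) (x • a + y • b + z • c)
      = (x - z)^2 + y^2 + z^2 * K := by
    intro x y z
    rw [lorentz_comb2, Laa, Lbb, hLcc, Lab, Lac, Lbc]; ring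
  -- representation of span elements
  have hrep : ∀ v ∈ Submodule.span ℝ ({a, b, c} : Set (Fin 5 → ℝ)),
      ∃ x y z : ℝ, v = x • a + y • b + z • c := by
    intro v hv
    rw [show ({a, b, c} : Set (Fin 5 → ℝ)) = insert a (insert b {c}) from rfl,
      Submodule.mem_span_insert] at hv
    obtain ⟨x, w, hw, rfl⟩ := hv
    rw [Submodule.mem_span_insert] at hw
    obtain ⟨y, u, hu, rfl⟩ := hw
    rw [Submodule.mem_span_singleton] at hu
    obtain ⟨z, rfl⟩ := hu
    exact ⟨x, y, z, by abel⟩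
  have hkmem : a + c ∈ Submodule.span ℝ ({a, b, c} : Set (Fin 5 → ℝ)) := by
    exact Submodule.add_mem _ (Submodule.subset_span (by simp))
      (Submodule.subset_span (by simp))
  -- all-zero coefficients give zero vector
  have hzero : ∀ x y z : ℝ, x • a + y • b + z • c = 0 → x = 0 ∧ y = 0 ∧ z = 0 := by
    intro x y z h
    have h1 : lorentz a (x • a + y • b + z • c) = 0 := by rw [h]; simp [lorentz]
    rw [lorentz_comb_right, Laa, Lab, Lac] at h1
    have h2 : lorentz b (x • a + y • b + z • c) = 0 := by rw [h]; simp [lorentz]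
    rw [lorentz_comb_right, lorentz_symm b a, Lab, Lbb, Lbc] at h2
    have hy : y = 0 := by linarith
    have hxz : x = z := by linarith
    subst hy hxz
    have hx0 : x • (a + c) = 0 := by
      have h' : x • a + x • c = 0 := by simpa using h
      rw [smul_add]; exact h'
    rcases smul_eq_zero.mp hx0 with h' | h'
    · exact ⟨h', rfl, h'⟩
    · exact absurd h' hkg_ne
  -- main parts
  have part2 : (∃ v ∈ Submodule.span ℝ ({a, b, c} : Set (Fin 5 → ℝ)),
        v ≠ 0 ∧ lorentz v v ≤ 0) ↔ K ≤ 0 := by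
    constructor
    · rintro ⟨v, hv, hvne, hvle⟩
      obtain ⟨x, y, z, rfl⟩ := hrep v hv
      rw [hQ] at hvle
      by_contra hKpos
      push_neg at hKpos
      have hz2 : z^2 = 0 := by nlinarith [sq_nonneg (x - z), sq_nonneg y, sq_nonneg z]
      have hz : z = 0 := by
        have := pow_eq_zero_iff (n := 2) (by norm_num) |>.mp hz2
        exact this
      subst hz
      have hx2 : x^2 = 0 := by nlinarith [sq_nonneg y]
      have hy2 : y^2 = 0 := by nlinarith [sq_nonneg x]
      have hx : x = 0 := pow_eq_zero_iff (n := 2) (by norm_num) |>.mp hx2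
      have hy : y = 0 := pow_eq_zero_iff (n := 2) (by norm_num) |>.mp hy2
      exact hvne (by simp [hx, hy])
    · intro hKle
      exact ⟨a + c, hkmem, hkg_ne, by rw [← hK]; exact hKle⟩
  have part1 : (∃ v ∈ Submodule.span ℝ ({a, b, c} : Set (Fin 5 → ℝ)),
        v ≠ 0 ∧ lorentz v v < 0) ↔ K < 0 := by
    constructor
    · rintro ⟨v, hv, hvne, hvlt⟩
      obtain ⟨x, y, z, rfl⟩ := hrep v hv
      rw [hQ] at hvlt
      by_contra hKpos
      push_neg at hKpos
      nlinarith [sq_nonneg (x - z), sq_nonneg y, sq_nonneg z,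
        mul_nonneg (sq_nonneg z) hKpos]
    · intro hKlt
      exact ⟨a + c, hkmem, hkg_ne, by rw [← hK]; exact hKlt⟩
  have part3 : (∀ v ∈ Submodule.span ℝ ({a, b, c} : Set (Fin 5 → ℝ)),
        v ≠ 0 → 0 < lorentz v v) ↔ 0 < K := by
    constructor
    · intro hpos
      have := hpos (a + c) hkmem hkg_ne
      rwa [← hK] at this
    · intro hKpos v hv hvne
      by_contra hle
      push_neg at hle
      have := part2.mp ⟨v, hv, hvne, hle⟩
      linarith
  refine ⟨?_, part1, part2, part3⟩
  rw [Fintype.linearIndependent_iff]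
  intro g hg
  rw [Fin.sum_univ_three] at hg
  simp only [Matrix.cons_val_zero, Matrix.cons_val_one, Matrix.head_cons,
    Matrix.cons_val_two, Matrix.tail_cons] at hg
  obtain ⟨h0, h1, h2⟩ := hzero _ _ _ hg
  intro i
  fin_cases i <;> assumption
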